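/- arXiv:2411.08086 — 2 statements merged into one kernel-verified Lean document; each statement's English description precedes it below -/
import Mathlib

section
/- Let H be a Hilbert space and let (a_i)_{i∈F} and (b_i)_{i∈F} be finite families of bounded operators on H. Then for all vectors ξ, ξ', η, η' in H, |⟨(Σ_{i∈F} a_i* ⊗ b_i)(ξ⊗η), ξ'⊗η'⟩| ≤ ‖ξ‖ ‖η'‖ · ⟨(Σ_{i∈F} a_i* a_i) ξ', ξ'⟩^{1/2} · ⟨(Σ_{i∈F} b_i* b_i) η, η⟩^{1/2}. -/
/-! Since `⟪ξ', aᵢ* ξ⟫ = ⟪aᵢ ξ', ξ⟫`, Cauchy–Schwarz in `H` bounds the `i`-th term by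
`‖ξ‖ ‖η'‖ ‖aᵢ ξ'‖ ‖bᵢ η‖`; Cauchy–Schwarz in `ℓ²(F)` then bounds `∑ ‖aᵢ ξ'‖ ‖bᵢ η‖`, and
`⟪(∑ aᵢ* aᵢ) ξ', ξ'⟫ = ∑ ‖aᵢ ξ'‖²`. -/

open ContinuousLinearMap

section

variable {𝕜 E F ι : Type*} [RCLike 𝕜]
  [NormedAddCommGroup E] [InnerProductSpace 𝕜 E] [CompleteSpace E]
  [NormedAddCommGroup F] [InnerProductSpace 𝕜 F] [CompleteSpace F]

theorem re_inner_sum_adjoint_comp_self (s : Finset ι) (a : ι → E →L[𝕜] F) (x : E) :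
    RCLike.re (inner 𝕜 x ((∑ i ∈ s, (adjoint (a i)).comp (a i)) x)) = ∑ i ∈ s, ‖a i x‖ ^ 2 := by
  rw [sum_apply, inner_sum, map_sum]
  refine Finset.sum_congr rfl fun i _ => ?_
  rw [comp_apply, adjoint_inner_right, inner_self_eq_norm_sq]

theorem norm_inner_adjoint_apply_le (a : E →L[𝕜] F) (x : F) (y : E) :
    ‖inner 𝕜 y (adjoint a x)‖ ≤ ‖x‖ * ‖a y‖ := by
  rw [adjoint_inner_right, mul_comm]
  exact norm_inner_le_norm _ _

end

/-- Cauchy–Schwarz estimate for the pairing of a finite sum of elementary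
tensor operators `∑ aᵢ* ⊗ bᵢ` against elementary tensors, expressed via the identity
`⟨(∑ aᵢ*⊗bᵢ)(ξ⊗η), ξ'⊗η'⟩ = ∑ ⟨aᵢ*ξ,ξ'⟩⟨bᵢη,η'⟩`. -/
theorem stmt0 {H : Type*} [NormedAddCommGroup H] [InnerProductSpace ℂ H] [CompleteSpace H]
    {ι : Type*} (F : Finset ι) (a b : ι → H →L[ℂ] H) (ξ ξ' η η' : H) :
    ‖∑ i ∈ F,
        (inner ℂ ξ' ((ContinuousLinearMap.adjoint (a i)) ξ) : ℂ) * (inner ℂ η' ((b i) η) : ℂ)‖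
      ≤ ‖ξ‖ * ‖η'‖ *
        Real.sqrt ((inner ℂ ξ' ((∑ i ∈ F, (ContinuousLinearMap.adjoint (a i)).comp (a i)) ξ') : ℂ).re) *
        Real.sqrt (((inner ℂ η ((∑ i ∈ F, (ContinuousLinearMap.adjoint (b i)).comp (b i)) η) : ℂ)).re) := by
  rw [← RCLike.re_eq_complex_re, re_inner_sum_adjoint_comp_self,
    re_inner_sum_adjoint_comp_self, mul_assoc _ (√_)]
  calc _ ≤ ∑ i ∈ F, ‖ξ‖ * ‖η'‖ * (‖a i ξ'‖ * ‖b i η‖) := by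
        refine (norm_sum_le _ _).trans (Finset.sum_le_sum fun i _ => ?_)
        rw [norm_mul, mul_mul_mul_comm]
        exact mul_le_mul (norm_inner_adjoint_apply_le _ _ _) (norm_inner_le_norm _ _)
          (norm_nonneg _) (by positivity)
    _ ≤ _ := by
        rw [← Finset.mul_sum]
        gcongr
        exact Real.sum_mul_le_sqrt_mul_sqrt _ _ _
end

section
/- Let D ∈ M_n(ℂ) ⊗ M_m(ℂ), let N ⊆ M_m(ℂ) be a unital *-subalgebra, and write D = Σ_{i,j} ε_{i,j} ⊗ d_{i,j} with d_{i,j} ∈ M_m(ℂ). Then the following are equivalent: (a) d_{i,j}* d_{k,l} ∈ N for all i,j,k,l; (b) D*(x ⊗ I_m) D ∈ M_n(ℂ) ⊗ N for every x ∈ M_n(ℂ). -/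
open Matrix
open scoped Kronecker

/-!
The `(p, q)` block of `Dᴴ (x ⊗ 1) D` is `∑ i j, x i j • d_{i,p}ᴴ d_{j,q}`. Hence (a) gives (b)
because `N` is closed under linear combinations, and conversely `x = ε_{i,k}` makes the
`(j, l)` block equal to `d_{i,j}ᴴ d_{k,l}`.
-/

namespace Matrix

variable {ι κ R : Type*} [Fintype ι] [Fintype κ] [DecidableEq κ] [CommSemiring R] [StarRing R]

theorem of_conjTranspose_mul_kronecker_one_mul_apply (D : Matrix (ι × κ) (ι × κ) R)
    (x : Matrix ι ι R) (p q : ι) :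
    (of fun r s => (Dᴴ * (x ⊗ₖ (1 : Matrix κ κ R)) * D) (p, r) (q, s)) =
      ∑ i, ∑ j, x i j •
        ((of fun a b => D (i, a) (p, b))ᴴ * of fun a b => D (j, a) (q, b)) := by
  ext r s
  simp only [mul_apply, sum_apply, smul_apply, of_apply, conjTranspose_apply, kroneckerMap_apply,
    one_apply, Fintype.sum_prod_type, mul_ite, mul_one, mul_zero, Finset.sum_ite_eq',
    Finset.mem_univ, if_true, smul_eq_mul, Finset.sum_mul, Finset.mul_sum]
  refine (Finset.sum_congr rfl fun j _ => Finset.sum_comm).trans ?_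
  rw [Finset.sum_comm]
  refine Finset.sum_congr rfl fun i _ => Finset.sum_congr rfl fun j _ =>
    Finset.sum_congr rfl fun a _ => ?_
  ring

theorem of_conjTranspose_mul_single_kronecker_one_mul_apply [DecidableEq ι]
    (D : Matrix (ι × κ) (ι × κ) R) (i k p q : ι) (c : R) :
    (of fun r s => (Dᴴ * (single i k c ⊗ₖ (1 : Matrix κ κ R)) * D) (p, r) (q, s)) =
      c • ((of fun a b => D (i, a) (p, b))ᴴ * of fun a b => D (k, a) (q, b)) := by
  simp [of_conjTranspose_mul_kronecker_one_mul_apply, single_apply, ite_smul, ite_and]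

theorem of_conjTranspose_mul_kronecker_one_mul_mem_iff [DecidableEq ι]
    (S : Submodule R (Matrix κ κ R)) (D : Matrix (ι × κ) (ι × κ) R) :
    (∀ i j k l : ι, (of fun p q => D (i, p) (j, q))ᴴ * (of fun p q => D (k, p) (l, q)) ∈ S) ↔
      ∀ (x : Matrix ι ι R) (p q : ι),
        (of fun r s => (Dᴴ * (x ⊗ₖ (1 : Matrix κ κ R)) * D) (p, r) (q, s)) ∈ S := by
  refine ⟨fun h x p q => ?_, fun h i j k l => ?_⟩
  · rw [of_conjTranspose_mul_kronecker_one_mul_apply]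
    exact S.sum_mem fun i _ => S.sum_mem fun j _ => S.smul_mem _ (h i p j q)
  · simpa [of_conjTranspose_mul_single_kronecker_one_mul_apply] using h (single i k 1) j l

end Matrix

/-- For `D ∈ Mₙ(ℂ) ⊗ Mₘ(ℂ)` with blocks `d_{i,j}` and a unital *-subalgebra
`N ⊆ Mₘ(ℂ)`: all `d_{i,j}* d_{k,l}` lie in `N` iff `D*(x ⊗ Iₘ)D ∈ Mₙ(ℂ) ⊗ N` for every `x`
(membership in `Mₙ(ℂ) ⊗ N` meaning all blocks lie in `N`). -/
theorem stmt3 {n m : ℕ} (N : StarSubalgebra ℂ (Matrix (Fin m) (Fin m) ℂ))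
    (D : Matrix (Fin n × Fin m) (Fin n × Fin m) ℂ) :
    (∀ i j k l : Fin n,
        (Matrix.of fun p q => D (i, p) (j, q))ᴴ * (Matrix.of fun p q => D (k, p) (l, q)) ∈ N)
      ↔ (∀ x : Matrix (Fin n) (Fin n) ℂ, ∀ p q : Fin n,
          (Matrix.of fun r s =>
            (Dᴴ * (x ⊗ₖ (1 : Matrix (Fin m) (Fin m) ℂ)) * D) (p, r) (q, s)) ∈ N) :=
  of_conjTranspose_mul_kronecker_one_mul_mem_iff (Subalgebra.toSubmodule N.toSubalgebra) D
end
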